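/- Let $E \subseteq \mathbb{F}_q^2$ and $\nu(t) = |\{(x,y) \in E \times E : \|x-y\| = t\}|$. Then $\sum_{t \in \mathbb{F}_q} \nu(t)^2 = q^6 \sum_{t \in \mathbb{F}_q} \big(\sum_{m \in S_t} |\widehat{E}(m)|^2\big)^2 + q^{-1}|E|^4 - q|E|^2$. -/

import Mathlib

/-!
Writing `|Ê(m)|²` as `q⁻⁴ ∑_{x,y ∈ E} χ((x - y)·m)`, the right-hand sum becomes a sum over pairs of
pairs `(x, y), (x', y')` of the kernel `K(z, z') = ∑_{‖m‖ = ‖m'‖} χ(z·m + z'·m')` at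
`z = x - y`, `z' = x' - y'`. Detecting `‖m‖ = ‖m'‖` with the characters `s ↦ χ(s(‖m‖ - ‖m'‖))`
factors `K` into one-dimensional quadratic Gauss sums `g(s, c) = ∑_u χ(s u² + c u)`; completing
the square and `g(s, 0) g(-s, 0) = q` give `q K(z, z') = q⁴ [z = 0] [z' = 0] + q² (q [‖z‖ = ‖z'‖] - 1)`
in the plane. Summed over the pairs of pairs, the three terms are `q⁴|E|²`, `q³ ∑_t ν(t)²` and
`-q²|E|⁴`.
-/

open Finset

lemma AddChar.map_sum_eq_prod {ι A M : Type*} [AddCommMonoid A] [CommMonoid M]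
    (ψ : AddChar A M) (s : Finset ι) (f : ι → A) :
    ψ (∑ i ∈ s, f i) = ∏ i ∈ s, ψ (f i) := by
  classical
  induction s using Finset.induction_on with
  | empty => simp
  | insert i s hi ih => rw [sum_insert hi, prod_insert hi, map_add_eq_mul, ih]

lemma sum_sq_sum_filter_eq {α β R : Type*} [Fintype β] [DecidableEq β] [CommSemiring R]
    (A : Finset α) (f : α → β) (b : α → R) :
    ∑ t, (∑ i ∈ A with f i = t, b i) ^ 2
      = ∑ i ∈ A, ∑ j ∈ A, if f i = f j then b i * b j else 0 := by
  set S : β → R := fun t => ∑ j ∈ A with f j = t, b j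
  have hsq (t : β) : S t ^ 2 = ∑ i ∈ A with f i = t, b i * S (f i) := by
    rw [sq, sum_mul]
    exact sum_congr rfl fun i hi => by rw [(mem_filter.mp hi).2]
  rw [sum_congr rfl fun t _ => hsq t]
  simp_rw [sum_fiberwise, S, mul_sum, sum_filter]
  exact sum_congr rfl fun i _ => sum_congr rfl fun j _ => if_congr eq_comm rfl rfl

section QuadraticSum

variable {F R : Type*} [Field F] [Fintype F] [CommRing R] (ψ : AddChar F R)

def quadraticSum (s c : F) : R := ∑ u, ψ (s * u ^ 2 + c * u)

variable {ψ}

lemma quadraticSum_zero_left [DecidableEq F] [IsDomain R] (hψ : ψ ≠ 1) (c : F) :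
    quadraticSum ψ 0 c = if c = 0 then (Fintype.card F : R) else 0 := by
  simp only [quadraticSum, zero_mul, zero_add, mul_comm c]
  exact_mod_cast AddChar.sum_mulShift c (.of_ne_one hψ)

lemma quadraticSum_eq_apply_mul (h2 : (2 : F) ≠ 0) {s : F} (hs : s ≠ 0) (c : F) :
    quadraticSum ψ s c = ψ (-(c ^ 2 / (4 * s))) * quadraticSum ψ s 0 := by
  have h4 : (4 : F) ≠ 0 := by
    rw [show (4 : F) = 2 * 2 by norm_num]; exact mul_ne_zero h2 h2
  rw [quadraticSum, quadraticSum, mul_sum]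
  -- complete the square: `s u² + c u = s (u + c / 2s)² - c² / 4s`
  refine Fintype.sum_equiv (Equiv.addRight (c / (2 * s))) _ _ fun u => ?_
  rw [Equiv.coe_addRight, ← AddChar.map_add_eq_mul]
  congr 1
  field_simp
  ring

lemma quadraticSum_mul_quadraticSum_neg [DecidableEq F] [IsDomain R] (hψ : ψ ≠ 1)
    (h2 : (2 : F) ≠ 0) {s : F} (hs : s ≠ 0) :
    quadraticSum ψ s 0 * quadraticSum ψ (-s) 0 = Fintype.card F := by
  -- with `u = w + v`, the exponent `s u² - s v² = s w² + v (2 s w)` is linear in `v`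
  have hshift (v : F) : ∑ u, ψ (s * u ^ 2 + 0 * u) * ψ (-s * v ^ 2 + 0 * v)
      = ∑ w, ψ (s * w ^ 2) * ψ (v * (2 * s * w)) := by
    refine Fintype.sum_equiv (Equiv.subRight v) _ _ fun w => ?_
    rw [Equiv.subRight_apply, ← AddChar.map_add_eq_mul, ← AddChar.map_add_eq_mul]
    congr 1
    ring
  calc quadraticSum ψ s 0 * quadraticSum ψ (-s) 0
      = ∑ w, ψ (s * w ^ 2) * ∑ v, ψ (v * (2 * s * w)) := by
        simp_rw [quadraticSum, sum_mul_sum, mul_sum]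
        rw [sum_comm, sum_congr rfl fun v _ => hshift v, sum_comm]
    _ = Fintype.card F := by
        simp_rw [AddChar.sum_mulShift _ (.of_ne_one hψ), mul_eq_zero, h2, hs, false_or]
        simp

lemma AddChar.sum_apply_div [DecidableEq F] [IsDomain R] (hψ : ψ ≠ 1) (a : F) :
    ∑ s, ψ (a / s) = if a = 0 then (Fintype.card F : R) else 0 := by
  have := AddChar.sum_mulShift a (.of_ne_one hψ)
  push_cast at this
  rw [← this]
  exact Fintype.sum_equiv (Equiv.inv F) _ _ fun s => by rw [Equiv.inv_apply, div_eq_inv_mul]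

end QuadraticSum

section Sphere

variable {ι F R : Type*} [Fintype ι] [Field F] [Fintype F] [CommRing R] {ψ : AddChar F R}

def sqNorm (x : ι → F) : F := ∑ i, x i ^ 2

variable (ψ) in
lemma sum_apply_mul_sqNorm_add_dotProduct [DecidableEq ι] (s : F) (z : ι → F) :
    ∑ m : ι → F, ψ (s * sqNorm m + z ⬝ᵥ m) = ∏ i, quadraticSum ψ s (z i) := by
  simp_rw [quadraticSum, Fintype.prod_sum, sqNorm, dotProduct, mul_sum, ← sum_add_distrib,
    ψ.map_sum_eq_prod]

lemma prod_quadraticSum_zero_left [DecidableEq F] [IsDomain R] (hψ : ψ ≠ 1) (z : ι → F) :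
    ∏ i, quadraticSum ψ 0 (z i) = if z = 0 then (Fintype.card F : R) ^ Fintype.card ι else 0 := by
  simp_rw [quadraticSum_zero_left hψ, prod_ite_zero, prod_const, card_univ, funext_iff,
    Pi.zero_apply, mem_univ, true_imp_iff]

lemma prod_quadraticSum_mul_prod_quadraticSum_neg [DecidableEq F] [IsDomain R] (hψ : ψ ≠ 1)
    (h2 : (2 : F) ≠ 0) {s : F} (hs : s ≠ 0) (z z' : ι → F) :
    (∏ i, quadraticSum ψ s (z i)) * ∏ i, quadraticSum ψ (-s) (z' i)
      = (Fintype.card F : R) ^ Fintype.card ι * ψ ((sqNorm z' - sqNorm z) / (4 * s)) := by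
  rw [prod_congr rfl fun i _ => quadraticSum_eq_apply_mul h2 hs (z i),
    prod_congr rfl fun i _ => quadraticSum_eq_apply_mul h2 (neg_ne_zero.2 hs) (z' i)]
  simp_rw [prod_mul_distrib, prod_const, card_univ, ← ψ.map_sum_eq_prod]
  rw [mul_mul_mul_comm, ← mul_pow, quadraticSum_mul_quadraticSum_neg hψ h2 hs,
    ← ψ.map_add_eq_mul, mul_comm]
  congr 2
  simp only [sqNorm, sub_div, sum_div, ← sum_add_distrib, ← sum_sub_distrib]
  exact sum_congr rfl fun i _ => by rw [mul_neg, div_neg]; ring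

lemma card_mul_sum_sum_ite_sqNorm_eq_sum_prod [DecidableEq ι] [DecidableEq F] [IsDomain R]
    (hψ : ψ ≠ 1) (z z' : ι → F) :
    (Fintype.card F : R) * ∑ m : ι → F, ∑ m' : ι → F,
        (if sqNorm m = sqNorm m' then ψ (z ⬝ᵥ m + z' ⬝ᵥ m') else 0)
      = ∑ s, (∏ i, quadraticSum ψ s (z i)) * ∏ i, quadraticSum ψ (-s) (z' i) := by
  -- detect `sqNorm m = sqNorm m'` by orthogonality of the characters `s ↦ ψ (s * a)`
  have hdetect (m m' : ι → F) :
      (Fintype.card F : R) * (if sqNorm m = sqNorm m' then ψ (z ⬝ᵥ m + z' ⬝ᵥ m') else 0)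
        = ∑ s, ψ (s * sqNorm m + z ⬝ᵥ m) * ψ (-s * sqNorm m' + z' ⬝ᵥ m') := by
    have horth := AddChar.sum_mulShift (sqNorm m - sqNorm m') (.of_ne_one hψ)
    push_cast at horth
    have hsplit (s : F) : s * sqNorm m + z ⬝ᵥ m + (-s * sqNorm m' + z' ⬝ᵥ m')
        = s * (sqNorm m - sqNorm m') + (z ⬝ᵥ m + z' ⬝ᵥ m') := by ring
    simp_rw [← AddChar.map_add_eq_mul, hsplit, AddChar.map_add_eq_mul, ← sum_mul, horth,
      sub_eq_zero]
    split_ifs <;> simp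
  simp_rw [mul_sum, hdetect, ← sum_apply_mul_sqNorm_add_dotProduct, sum_mul_sum]
  exact sum_comm_cycle

lemma card_mul_sum_sum_ite_sqNorm_eq [DecidableEq ι] [DecidableEq F] [IsDomain R]
    (hψ : ψ ≠ 1) (h2 : (2 : F) ≠ 0) (z z' : ι → F) :
    (Fintype.card F : R) * ∑ m : ι → F, ∑ m' : ι → F,
        (if sqNorm m = sqNorm m' then ψ (z ⬝ᵥ m + z' ⬝ᵥ m') else 0)
      = (Fintype.card F : R) ^ (2 * Fintype.card ι) * (if z = 0 then 1 else 0)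
            * (if z' = 0 then 1 else 0)
        + (Fintype.card F : R) ^ Fintype.card ι
            * ((if sqNorm z = sqNorm z' then (Fintype.card F : R) else 0) - 1) := by
  have h4 : (4 : F) ≠ 0 := by
    rw [show (4 : F) = 2 * 2 by norm_num]; exact mul_ne_zero h2 h2
  rw [card_mul_sum_sum_ite_sqNorm_eq_sum_prod hψ, ← add_sum_erase _ _ (mem_univ 0), neg_zero,
    prod_quadraticSum_zero_left hψ, prod_quadraticSum_zero_left hψ,
    sum_congr rfl fun s hs => prod_quadraticSum_mul_prod_quadraticSum_neg hψ h2
      (ne_of_mem_erase hs) z z', ← mul_sum, sum_erase_eq_sub (mem_univ 0)]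
  simp_rw [← div_div, AddChar.sum_apply_div hψ, div_zero, AddChar.map_zero_eq_one,
    div_eq_zero_iff, h4, or_false, sub_eq_zero, eq_comm (a := sqNorm z')]
  split_ifs <;> ring

theorem card_mul_sum_sq_sum_sphere_eq [DecidableEq ι] [DecidableEq F] [IsDomain R]
    (hψ : ψ ≠ 1) (h2 : (2 : F) ≠ 0) (E : Finset (ι → F)) :
    (Fintype.card F : R) * ∑ t, (∑ m with sqNorm m = t, ∑ p ∈ E ×ˢ E, ψ ((p.1 - p.2) ⬝ᵥ m)) ^ 2
      = (Fintype.card F : R) ^ (2 * Fintype.card ι) * (#E : R) ^ 2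
        + (Fintype.card F : R) ^ Fintype.card ι * ((Fintype.card F : R)
            * ∑ t, (#{p ∈ E ×ˢ E | sqNorm (p.1 - p.2) = t} : R) ^ 2 - (#E : R) ^ 4) := by
  have hν : ∑ t, (#{p ∈ E ×ˢ E | sqNorm (p.1 - p.2) = t} : R) ^ 2
      = ∑ p ∈ E ×ˢ E, ∑ p' ∈ E ×ˢ E,
          if sqNorm (p.1 - p.2) = sqNorm (p'.1 - p'.2) then 1 else 0 := by
    simpa using sum_sq_sum_filter_eq (E ×ˢ E) (fun p => sqNorm (p.1 - p.2)) (fun _ => (1 : R))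
  have hdiag : ∑ p ∈ E ×ˢ E, (if p.1 - p.2 = 0 then (1 : R) else 0) = #E := by
    simp_rw [sub_eq_zero]
    rw [sum_boole, ← diag_eq_filter, diag_card]
  calc _ = ∑ p ∈ E ×ˢ E, ∑ p' ∈ E ×ˢ E, (Fintype.card F : R) * ∑ m : ι → F, ∑ m' : ι → F,
          if sqNorm m = sqNorm m' then ψ ((p.1 - p.2) ⬝ᵥ m + (p'.1 - p'.2) ⬝ᵥ m') else 0 := by
        rw [sum_sq_sum_filter_eq]
        simp_rw [sum_mul_sum, ← AddChar.map_add_eq_mul, ite_sum_zero]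
        rw [sum_comm_cycle, mul_sum]
        exact sum_congr rfl fun p _ => by rw [sum_comm_cycle, mul_sum]
    _ = _ := by
        simp_rw [card_mul_sum_sum_ite_sqNorm_eq hψ h2, mul_sub, mul_one, sum_add_distrib,
          sum_sub_distrib]
        simp only [← mul_sum, ← sum_mul, hdiag]
        simp_rw [hν, sum_const, card_product, nsmul_eq_mul, mul_sum (a := (Fintype.card F : R)),
          mul_boole]
        push_cast
        ring

end Sphere

lemma ofReal_norm_sq_sum_apply_neg_dotProduct {ι F : Type*} [Fintype ι] [CommRing F] [Finite F]
    (ψ : AddChar F ℂ) (E : Finset (ι → F)) (m : ι → F) :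
    ((‖∑ x ∈ E, ψ (-(x ⬝ᵥ m))‖ ^ 2 : ℝ) : ℂ) = ∑ p ∈ E ×ˢ E, ψ ((p.1 - p.2) ⬝ᵥ m) := by
  rw [Complex.ofReal_pow, ← Complex.conj_mul', map_sum, sum_mul_sum, sum_product]
  refine sum_congr rfl fun x _ => sum_congr rfl fun y _ => ?_
  rw [← ψ.map_neg_eq_conj, neg_neg, ← AddChar.map_add_eq_mul, sub_dotProduct, sub_eq_add_neg]

/-- For `E ⊆ 𝔽_q²` and `ν(t)` the number of pairs in `E × E` at distance `t`:
`∑_t ν(t)² = q⁶ ∑_t (∑_{m ∈ S_t} |Ê(m)|²)² + q⁻¹|E|⁴ - q|E|²`. -/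
theorem stmt_1 (F : Type) [Field F] [Fintype F] [DecidableEq F]
    (hchar : ringChar F ≠ 2)
    (χ : AddChar F ℂ) (hχ : χ ≠ 1)
    (E : Finset (Fin 2 → F)) :
    ∑ t : F, (((E ×ˢ E).filter
        (fun p : (Fin 2 → F) × (Fin 2 → F) => ∑ i, (p.1 i - p.2 i) ^ 2 = t)).card : ℝ) ^ 2
      = (Fintype.card F : ℝ) ^ 6 *
          ∑ t : F, (∑ m ∈ Finset.univ.filter (fun m : Fin 2 → F => ∑ i, m i ^ 2 = t),
            ‖(Fintype.card F : ℂ)⁻¹ ^ 2 * ∑ x ∈ E, χ (-(∑ i, x i * m i))‖ ^ 2) ^ 2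
        + (Fintype.card F : ℝ)⁻¹ * (E.card : ℝ) ^ 4
        - (Fintype.card F : ℝ) * (E.card : ℝ) ^ 2 := by
  have key := card_mul_sum_sq_sum_sphere_eq hχ (Ring.two_ne_zero hchar) E
  have hq : (Fintype.card F : ℂ) ≠ 0 := Nat.cast_ne_zero.2 Fintype.card_ne_zero
  have hA (m : Fin 2 → F) :
      ((‖(Fintype.card F : ℂ)⁻¹ ^ 2 * ∑ x ∈ E, χ (-(∑ i, x i * m i))‖ ^ 2 : ℝ) : ℂ)
        = (Fintype.card F : ℂ)⁻¹ ^ 4 * ∑ p ∈ E ×ˢ E, χ ((p.1 - p.2) ⬝ᵥ m) := by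
    rw [norm_mul, mul_pow, Complex.ofReal_mul, ← ofReal_norm_sq_sum_apply_neg_dotProduct]
    congr 1
    simp only [norm_pow, norm_inv, Complex.norm_natCast]
    push_cast
    ring
  apply Complex.ofReal_injective
  push_cast [hA]
  simp only [sqNorm, Pi.sub_apply, Fintype.card_fin] at key
  simp_rw [← mul_sum, mul_pow, ← mul_sum]
  field_simp
  apply mul_left_cancel₀ hq
  linear_combination (norm := ring_nf) -key
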